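/- arXiv:1508.03870 — 3 statements merged into one kernel-verified Lean document; each statement's English description precedes it below -/
import Mathlib

section
/- For every k ≥ 3, the odd cycle C_{2k+1} is a thundercloud-forest graph. -/
/-- `I` is a cloud witnessing that `H` is a cloud-forest graph: `I` is independent,
the complement of `I` induces a forest `F`, every edge from `I` goes to a leaf or
isolated vertex of `F` (degree at most 1 in `F`), and no two adjacent leaves of `F`
both send edges to `I`. -/
def CloudForestWitness {V : Type*} (H : SimpleGraph V) (I : Set V) : Prop :=
  (∀ u ∈ I, ∀ v ∈ I, ¬ H.Adj u v) ∧
  (H.induce Iᶜ).IsAcyclic ∧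
  (∀ u ∈ I, ∀ v, H.Adj u v → {w | w ∉ I ∧ H.Adj v w}.ncard ≤ 1) ∧
  (∀ v w, v ∉ I → w ∉ I → H.Adj v w →
    (∃ u ∈ I, H.Adj u v) → (∃ u ∈ I, H.Adj u w) → False)

/-- `H` is a cloud-forest graph. -/
def IsCloudForestGraph {V : Type*} (H : SimpleGraph V) : Prop :=
  ∃ I : Set V, CloudForestWitness H I


/-- `I` witnesses that `H` is a thundercloud-forest graph: it is a cloud-forest
witness and moreover every odd cycle of `H` uses at least two vertices of `I`. -/
def ThundercloudForestWitness {V : Type*} (H : SimpleGraph V) (I : Set V) : Prop :=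
  CloudForestWitness H I ∧
  ∀ (v : V) (c : H.Walk v v), c.IsCycle → Odd c.length →
    2 ≤ {x ∈ I | x ∈ c.support}.ncard

/-- `H` is a thundercloud-forest graph. -/
def IsThundercloudForestGraph {V : Type*} (H : SimpleGraph V) : Prop :=
  ∃ I : Set V, ThundercloudForestWitness H I


open SimpleGraph
open Fin.NatCast

lemma support_getElem_eq {V : Type*} {G : SimpleGraph V} :
    ∀ {u v : V} (p : G.Walk u v) (i : ℕ) (h : i < p.support.length),
      p.support[i] = p.getVert i
  | _, _, Walk.nil, 0, _ => rfl
  | _, _, Walk.cons _ _, 0, _ => rfl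
  | _, _, Walk.cons h q, (i+1), hi => by
      simp only [Walk.support_cons, List.getElem_cons_succ, Walk.getVert_cons_succ]
      exact support_getElem_eq q i (by simpa [Walk.support_cons] using hi)

lemma path_getVert_inj {V : Type*} {G : SimpleGraph V} {u v : V} {p : G.Walk u v}
    (hp : p.support.Nodup) {i j : ℕ} (hi : i ≤ p.length) (hj : j ≤ p.length)
    (hij : p.getVert i = p.getVert j) : i = j := by
  have hi' : i < p.support.length := by rw [Walk.length_support]; omega
  have hj' : j < p.support.length := by rw [Walk.length_support]; omega
  have : p.support[i] = p.support[j] := by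
    rw [support_getElem_eq p i hi', support_getElem_eq p j hj', hij]
  exact (hp.getElem_inj_iff).mp this

lemma cycle_two_neighbors {V : Type*} {G : SimpleGraph V} {u : V} {c : G.Walk u u}
    (hc : c.IsCycle) :
    ∃ a b, a ≠ b ∧ G.Adj u a ∧ G.Adj u b ∧ a ∈ c.support ∧ b ∈ c.support := by
  have h3 := hc.three_le_length
  cases c with
  | nil => simp at h3
  | @cons _ x _ h q =>
    rw [Walk.cons_isCycle_iff] at hc
    obtain ⟨hq, -⟩ := hc
    have hlen : 2 ≤ q.length := by simp [Walk.length_cons] at h3; omega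
    have hilt : q.length - 1 < q.length := by omega
    have hadjb : G.Adj (q.getVert (q.length - 1)) u := by
      have := q.adj_getVert_succ hilt
      rwa [show q.length - 1 + 1 = q.length by omega, Walk.getVert_length] at this
    refine ⟨x, q.getVert (q.length - 1), ?_, h, hadjb.symm, ?_, ?_⟩
    · intro heq
      have h0 : q.getVert 0 = q.getVert (q.length - 1) := by
        rw [Walk.getVert_zero]; exact heq
      have := path_getVert_inj (hq.support_nodup) (by omega) (by omega) h0
      omega
    · simp [Walk.support_cons, q.start_mem_support]
    · rw [Walk.support_cons]
      refine List.mem_cons_of_mem _ ?_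
      rw [Walk.mem_support_iff_exists_getVert]
      exact ⟨q.length - 1, rfl, by omega⟩

lemma adj_iff_cg {n : ℕ} {u v : Fin (n+2)} :
    (cycleGraph (n+2)).Adj u v ↔ u = v + 1 ∨ v = u + 1 := by
  rw [cycleGraph_adj, sub_eq_iff_eq_add, sub_eq_iff_eq_add,
    add_comm (1 : Fin (n+2)) v, add_comm (1 : Fin (n+2)) u]

lemma succ_mem_support {n : ℕ} {v : Fin (n+2)} {c : (cycleGraph (n+2)).Walk v v}
    (hc : c.IsCycle) {u : Fin (n+2)} (hu : u ∈ c.support) : u + 1 ∈ c.support := by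
  classical
  obtain ⟨a, b, hab, ha, hb, has, hbs⟩ := cycle_two_neighbors (hc.rotate hu)
  have hmem : ∀ x : Fin (n+2), x ∈ (c.rotate u hu).support → x ∈ c.support := by
    intro x hx
    rcases (Walk.mem_support_iff _).mp hx with rfl | hx'
    · exact hu
    · exact (Walk.mem_support_iff _).mpr
        (Or.inr (((Walk.support_rotate c u hu).mem_iff).mp hx'))
  rw [adj_iff_cg] at ha hb
  rcases ha with ha | rfl
  · rcases hb with hb | rfl
    · exact absurd (add_right_cancel (ha ▸ hb : a + 1 = b + 1)) hab
    · exact hmem _ hbs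
  · exact hmem _ has

lemma cycleGraph_cycle_support {n : ℕ} {v : Fin (n+2)} {c : (cycleGraph (n+2)).Walk v v}
    (hc : c.IsCycle) (x : Fin (n+2)) : x ∈ c.support := by
  have key : ∀ i : ℕ, v + (i : Fin (n+2)) ∈ c.support := by
    intro i
    induction i with
    | zero => simpa using c.start_mem_support
    | succ i ih =>
      have h1 := succ_mem_support hc ih
      have : v + ((i : Fin (n+2)) + 1) = v + ((i+1 : ℕ) : Fin (n+2)) := by push_cast; ring
      rwa [add_assoc, this] at h1
  have hx := key (x - v).val
  rwa [Fin.cast_val_eq_self, add_sub_cancel] at hx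

lemma succ_val {n : ℕ} {a b : Fin (n+2)} (h : a = b + 1) :
    a.val = b.val + 1 ∨ (b.val = n + 1 ∧ a.val = 0) := by
  subst h
  have hval : (b + 1).val = (b.val + 1) % (n + 2) := by
    rw [Fin.val_add, Fin.val_one]
  rcases Nat.lt_or_ge (b.val + 1) (n + 2) with h' | h'
  · left; rw [hval, Nat.mod_eq_of_lt h']
  · have hb : b.val = n + 1 := by have := b.isLt; omega
    right
    refine ⟨hb, ?_⟩
    rw [hval, hb]
    exact Nat.mod_self _

lemma adj_val {n : ℕ} {u v : Fin (n+2)} (h : (cycleGraph (n+2)).Adj u v) :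
    (u.val = v.val + 1 ∨ (v.val = n + 1 ∧ u.val = 0)) ∨
    (v.val = u.val + 1 ∨ (u.val = n + 1 ∧ v.val = 0)) := by
  rw [adj_iff_cg] at h
  rcases h with h | h
  · exact Or.inl (succ_val h)
  · exact Or.inr (succ_val h)


/-- For every `k ≥ 3`, the odd cycle `C_{2k+1}` is a thundercloud-forest graph. -/
theorem stmt6 (k : ℕ) (hk : 3 ≤ k) :
    IsThundercloudForestGraph (SimpleGraph.cycleGraph (2 * k + 1)) := by
  obtain ⟨m, hm, hm5⟩ : ∃ m, 2 * k + 1 = m + 2 ∧ 5 ≤ m := ⟨2 * k - 1, by omega, by omega⟩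
  rw [hm]
  have h0v : (0 : Fin (m+2)).val = 0 := rfl
  have h2v : (2 : Fin (m+2)).val = 2 := by
    rw [show (2 : Fin (m+2)) = ((2 : ℕ) : Fin (m+2)) by norm_num, Fin.val_natCast,
      Nat.mod_eq_of_lt (by omega)]
  have h02 : (0 : Fin (m+2)) ≠ 2 := by
    intro h; rw [Fin.ext_iff, h0v, h2v] at h; omega
  refine ⟨{0, 2}, ⟨?_, ?_, ?_, ?_⟩, ?_⟩
  · -- independence
    rintro u hu v hv hadj
    have := adj_val hadj
    rcases hu with rfl | rfl <;> rcases hv with rfl | rfl <;>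
      simp only [h0v, h2v] at this <;> omega
  · -- acyclicity of the induced graph
    intro v c hc
    have hcm : (c.map (Embedding.induce (G := cycleGraph (m+2)) ({0, 2}ᶜ : Set (Fin (m+2)))).toHom).IsCycle :=
      (Walk.map_isCycle_iff_of_injective
        (Embedding.induce (G := cycleGraph (m+2)) ({0, 2}ᶜ : Set (Fin (m+2)))).injective).mpr hc
    have h0s := cycleGraph_cycle_support hcm (0 : Fin (m+2))
    rw [Walk.support_map, List.mem_map] at h0s
    obtain ⟨y, -, hy⟩ := h0s
    have : (y : Fin (m+2)) ∈ ({0, 2} : Set (Fin (m+2))) := by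
      rw [show ((y : Fin (m+2))) = 0 from hy]; exact Or.inl rfl
    exact y.2 this
  · -- degree condition
    intro u hu v hadj
    have hfin : ({w : Fin (m+2) | w ∉ ({0, 2} : Set (Fin (m+2))) ∧
        (cycleGraph (m+2)).Adj v w}).Finite := Set.toFinite _
    rw [Set.ncard_le_one_iff hfin]
    rintro w1 w2 ⟨hw1I, hw1a⟩ ⟨hw2I, hw2a⟩
    simp only [Set.mem_insert_iff, Set.mem_singleton_iff, not_or] at hw1I hw2I
    have a0 := adj_val hadj
    have a1 := adj_val hw1a
    have a2 := adj_val hw2a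
    have huv : u.val = 0 ∨ u.val = 2 := by
      rcases hu with rfl | rfl
      · exact Or.inl h0v
      · exact Or.inr h2v
    rw [Fin.ext_iff]
    have hb1 := w1.isLt
    have hb2 := w2.isLt
    have hbv := v.isLt
    have e1 : w1.val ≠ 0 ∧ w1.val ≠ 2 := by
      constructor <;> intro h <;> [exact hw1I.1 (by rw [Fin.ext_iff, h0v]; omega);
        exact hw1I.2 (by rw [Fin.ext_iff, h2v]; omega)]
    have e2 : w2.val ≠ 0 ∧ w2.val ≠ 2 := by
      constructor <;> intro h <;> [exact hw2I.1 (by rw [Fin.ext_iff, h0v]; omega);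
        exact hw2I.2 (by rw [Fin.ext_iff, h2v]; omega)]
    omega
  · -- no two adjacent leaves both attached
    rintro v w hv hw hadj ⟨u, hu, huv⟩ ⟨u', hu', hu'w⟩
    simp only [Set.mem_insert_iff, Set.mem_singleton_iff, not_or] at hv hw
    have a0 := adj_val hadj
    have a1 := adj_val huv
    have a2 := adj_val hu'w
    have huval : u.val = 0 ∨ u.val = 2 := by
      rcases hu with rfl | rfl
      · exact Or.inl h0v
      · exact Or.inr h2v
    have hu'val : u'.val = 0 ∨ u'.val = 2 := by
      rcases hu' with rfl | rfl
      · exact Or.inl h0v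
      · exact Or.inr h2v
    have ev : v.val ≠ 0 ∧ v.val ≠ 2 := by
      constructor <;> intro h <;> [exact hv.1 (by rw [Fin.ext_iff, h0v]; omega);
        exact hv.2 (by rw [Fin.ext_iff, h2v]; omega)]
    have ew : w.val ≠ 0 ∧ w.val ≠ 2 := by
      constructor <;> intro h <;> [exact hw.1 (by rw [Fin.ext_iff, h0v]; omega);
        exact hw.2 (by rw [Fin.ext_iff, h2v]; omega)]
    have hbv := v.isLt
    have hbw := w.isLt
    omega
  · -- thundercloud condition
    intro v c hc _
    have h0s := cycleGraph_cycle_support hc (0 : Fin (m+2))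
    have h2s := cycleGraph_cycle_support hc (2 : Fin (m+2))
    have hset : {x ∈ ({0, 2} : Set (Fin (m+2))) | x ∈ c.support} =
        ({0, 2} : Set (Fin (m+2))) := by
      ext x
      simp only [Set.mem_setOf_eq, Set.mem_insert_iff, Set.mem_singleton_iff]
      constructor
      · exact fun h => h.1
      · rintro (rfl | rfl)
        · exact ⟨Or.inl rfl, h0s⟩
        · exact ⟨Or.inr rfl, h2s⟩
    rw [hset, Set.ncard_pair h02]
end

section
/- Let H be a cloud-forest graph on s vertices, witnessed by a partition of V(H) into independent sets I and J and a forest F' with no edges between V(F') and I and each vertex of J having at most one neighbour in V(F'). Let G be a graph, E a set of edges of G of average degree at least 2s, W the set of endpoints of edges in E, and Z ⊆ V(G) a set of s vertices disjoint from W such that for every u ∈ W, Z has at least s common neighbours inside N_G(u). Suppose additionally Z is disjoint from all these common-neighbourhood sets used. Then H is a subgraph of G. -/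
/-!
Deleting vertices of `E`-degree less than `s` one at a time never exhausts `E`: each deletion
loses fewer than `s` edges while the budget `s * #W` drops by exactly `s`. What survives is a
nonempty `U ⊆ W` of minimum degree at least `s`, into which the forest `H[K]` embeds leaf by leaf,
each leaf going to an unused neighbour of the image of its parent. The independent sets `I` and
`J` are then added by Hall's theorem: a vertex of `I` may go anywhere in `Z`, a vertex of `J`
anywhere among the at least `s` common neighbours of `Z` and of the image of its unique
`K`-neighbour, and since `H` has only `s` vertices there is always room to keep the map injective.
-/

open Finset

theorem card_filter_mem_sym2_le_erase_add {β : Type*} [DecidableEq β] (E : Finset (Sym2 β))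
    (U : Finset β) (u : β) :
    #{e ∈ E | e ∈ U.sym2} ≤ #{e ∈ E | e ∈ (U.erase u).sym2} + #{v ∈ U | s(u, v) ∈ E} := by
  calc #{e ∈ E | e ∈ U.sym2}
      ≤ #({e ∈ E | e ∈ (U.erase u).sym2} ∪ {v ∈ U | s(u, v) ∈ E}.image (s(u, ·))) :=
        card_le_card fun e he => ?_
    _ ≤ _ := (card_union_le _ _).trans (by gcongr; exact card_image_le)
  induction e using Sym2.ind with
  | h x y =>
  simp only [mem_filter, mem_sym2_iff, Sym2.mem_iff, forall_eq_or_imp, forall_eq] at he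
  simp only [mem_union, mem_filter, mem_sym2_iff, Sym2.mem_iff, forall_eq_or_imp, forall_eq,
    mem_erase, mem_image]
  by_cases hx : x = u
  · subst hx; exact Or.inr ⟨y, ⟨he.2.2, he.1⟩, rfl⟩
  by_cases hy : y = u
  · subst hy; exact Or.inr ⟨x, ⟨he.2.1, Sym2.eq_swap ▸ he.1⟩, Sym2.eq_swap⟩
  exact Or.inl ⟨he.1, ⟨hx, he.2.1⟩, hy, he.2.2⟩

theorem exists_subset_forall_le_card_of_mul_card_le {β : Type*} [DecidableEq β]
    (E : Finset (Sym2 β)) (s : ℕ) (U : Finset β) (hne : {e ∈ E | e ∈ U.sym2}.Nonempty)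
    (hU : s * #U ≤ #{e ∈ E | e ∈ U.sym2}) :
    ∃ U' ⊆ U, U'.Nonempty ∧ ∀ u ∈ U', s ≤ #{v ∈ U' | s(u, v) ∈ E} := by
  induction U using Finset.strongInduction with
  | H U ih =>
  by_cases hall : ∀ u ∈ U, s ≤ #{v ∈ U | s(u, v) ∈ E}
  · refine ⟨U, subset_rfl, nonempty_iff_ne_empty.mpr ?_, hall⟩
    rintro rfl
    simp at hne
  push Not at hall
  obtain ⟨u, hu, hlt⟩ := hall
  have hloss := card_filter_mem_sym2_le_erase_add E U u
  have hcard : s * #U = s * #(U.erase u) + s := by rw [← card_erase_add_one hu, mul_add, mul_one]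
  obtain ⟨U', hU'u, hU'⟩ := ih (U.erase u) (erase_ssubset hu) (card_pos.mp (by omega)) (by omega)
  exact ⟨U', hU'u.trans (erase_subset u U), hU'⟩

theorem Finset.exists_injective_forall_mem_of_card_le {ι α : Type*} [Fintype ι]
    (t : ι → Finset α) (ht : ∀ i, Fintype.card ι ≤ #(t i)) :
    ∃ f : ι → α, f.Injective ∧ ∀ i, f i ∈ t i := by
  classical
  refine (all_card_le_biUnion_card_iff_exists_injective t).mp fun s => ?_
  rcases s.eq_empty_or_nonempty with rfl | ⟨i, hi⟩
  · simp
  · exact (card_le_univ s).trans ((ht i).trans (card_le_card (subset_biUnion_of_mem t hi)))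

namespace SimpleGraph

variable {V V' : Type*}

theorem exists_subset_le_card_adj_of_mul_card_le [DecidableEq V] {G : SimpleGraph V}
    [DecidableRel G.Adj] {E : Finset (Sym2 V)} (hEG : ∀ e ∈ E, e ∈ G.edgeSet) {W : Finset V}
    (hEW : ∀ e ∈ E, ∀ v ∈ e, v ∈ W) (hE : E.Nonempty) {s : ℕ} (havg : s * #W ≤ #E) :
    ∃ U ⊆ W, U.Nonempty ∧ ∀ u ∈ U, s ≤ #{v ∈ U | G.Adj u v} := by
  have hEW' : {e ∈ E | e ∈ W.sym2} = E :=
    filter_true_of_mem fun e he => mem_sym2_iff.mpr (hEW e he)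
  obtain ⟨U, hUW, hU, hUdeg⟩ :=
    exists_subset_forall_le_card_of_mul_card_le E s W (by rwa [hEW']) (by rwa [hEW'])
  refine ⟨U, hUW, hU, fun u hu => (hUdeg u hu).trans (card_le_card fun v hv => ?_)⟩
  simp only [mem_filter] at hv ⊢
  exact ⟨hv.1, hEG _ hv.2⟩

theorem IsAcyclic.exists_degree_le_one [Fintype V] [Nonempty V] {G : SimpleGraph V}
    [DecidableRel G.Adj] (hG : G.IsAcyclic) : ∃ v, G.degree v ≤ 1 := by
  classical
  set L := {n | ∃ (u v : V) (p : G.Walk u v), p.IsPath ∧ p.length = n}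
  have hL : BddAbove L := ⟨Fintype.card V, by rintro _ ⟨u, v, p, hp, rfl⟩; exact hp.length_lt.le⟩
  obtain ⟨u, v, p, hp, hlen⟩ : sSup L ∈ L :=
    Nat.sSup_mem ⟨0, Classical.arbitrary V, _, .nil, .nil, rfl⟩ hL
  -- the end of a longest path has no neighbour off the path, so only its predecessor
  have hpen : ∀ w, G.Adj v w → w = p.penultimate := fun w hvw =>
    hG.eq_penultimate_of_adj_end hp hvw <| by_contra fun hw => by
      have := le_csSup hL ⟨u, w, _, hp.concat hw hvw, rfl⟩
      simp only [Walk.length_concat] at this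
      omega
  refine ⟨v, card_le_one.mpr fun w hw w' hw' => ?_⟩
  rw [mem_neighborFinset] at hw hw'
  rw [hpen w hw, hpen w' hw']

theorem exists_mem_card_adj_le_one_of_isAcyclic_induce {G : SimpleGraph V} [DecidableRel G.Adj]
    {S : Finset V} (hS : (G.induce S).IsAcyclic) (hne : S.Nonempty) :
    ∃ a ∈ S, #{b ∈ S | G.Adj a b} ≤ 1 := by
  classical
  have : Nonempty (S : Set V) := hne.coe_sort
  obtain ⟨⟨a, ha⟩, hdeg⟩ := hS.exists_degree_le_one
  refine ⟨a, ha, le_of_eq_of_le ?_ hdeg⟩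
  rw [← card_neighborFinset_eq_degree, ← card_map (Function.Embedding.subtype _)]
  congr 1
  ext b
  simp [and_comm]

def InjHomOn (H : SimpleGraph V) (G : SimpleGraph V') (f : V → V') (A : Set V) : Prop :=
  Set.InjOn f A ∧ ∀ a ∈ A, ∀ b ∈ A, H.Adj a b → G.Adj (f a) (f b)

theorem InjHomOn.exists_extend {H : SimpleGraph V} {G : SimpleGraph V'} {f : V → V'}
    {A B : Finset V} (hf : InjHomOn H G f A) (hAB : Disjoint A B)
    (hB : ∀ b ∈ B, ∀ b' ∈ B, ¬ H.Adj b b') {T : Set V'}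
    (hT : ∀ b ∈ B, ∃ C : Finset V', ↑C ⊆ T ∧ #A + #B ≤ #C ∧
      ∀ v ∈ C, ∀ a ∈ A, H.Adj a b → G.Adj (f a) v) :
    ∃ g : V → V', InjHomOn H G g (A ∪ B) ∧ Set.EqOn g f A ∧ Set.MapsTo g B T := by
  classical
  choose! C hCT hCcard hCadj using hT
  obtain ⟨ψ, hψinj, hψ⟩ := exists_injective_forall_mem_of_card_le
    (fun b : B => C b \ A.image f) fun b => by
      have := le_card_sdiff (A.image f) (C b)
      have := card_image_le (s := A) (f := f)
      have := hCcard b b.2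
      simp only [Fintype.card_coe]
      omega
  set g : V → V' := fun v => if h : v ∈ B then ψ ⟨v, h⟩ else f v
  have hgA : Set.EqOn g f A := fun a ha => dif_neg (Finset.disjoint_left.mp hAB ha)
  have hgB : ∀ b (hb : b ∈ B), g b = ψ ⟨b, hb⟩ := fun b hb => dif_pos hb
  have hgC : ∀ b ∈ B, g b ∈ C b ∧ g b ∉ A.image f := fun b hb => by
    simpa only [hgB b hb, mem_sdiff] using hψ ⟨b, hb⟩
  refine ⟨g, ⟨?_, ?_⟩, hgA, fun b hb => hCT b hb (hgC b hb).1⟩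
  · rw [Set.injOn_union (disjoint_coe.mpr hAB)]
    refine ⟨hgA.injOn_iff.mpr hf.1, fun b hb b' hb' h => ?_, fun a ha b hb h => ?_⟩
    · rw [hgB b hb, hgB b' hb'] at h
      exact congrArg Subtype.val (hψinj h)
    · exact (hgC b hb).2 (by rw [← h, hgA ha]; exact mem_image_of_mem f ha)
  · rintro a (ha | ha) b (hb | hb) hab
    · rw [hgA ha, hgA hb]; exact hf.2 a ha b hb hab
    · rw [hgA ha]; exact hCadj b hb _ (hgC b hb).1 a ha hab
    · rw [hgA hb]; exact (hCadj a ha _ (hgC a ha).1 b hb hab.symm).symm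
    · exact absurd hab (hB a ha b hb)

theorem exists_injHomOn_of_isAcyclic_induce [DecidableEq V'] {F : SimpleGraph V}
    {G : SimpleGraph V'} [DecidableRel G.Adj] {U : Finset V'} (hU : U.Nonempty) {s : ℕ}
    (hdeg : ∀ u ∈ U, s ≤ #{v ∈ U | G.Adj u v}) (S : Finset V) (hS : (F.induce S).IsAcyclic)
    (hSs : #S ≤ s) : ∃ φ : V → V', InjHomOn F G φ S ∧ Set.MapsTo φ S U := by
  classical
  induction S using Finset.strongInduction with
  | H S ih =>
  rcases S.eq_empty_or_nonempty with rfl | hSne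
  · exact ⟨fun _ => hU.choose, by simp [InjHomOn], fun x hx => by simp at hx⟩
  -- embed `S` minus a leaf `a`, then place `a` next to the image of its neighbour
  obtain ⟨a, haS, hleaf⟩ := exists_mem_card_adj_le_one_of_isAcyclic_induce hS hSne
  have hsub : ((S.erase a : Finset V) : Set V) ≤ S := coe_subset.mpr (erase_subset a S)
  obtain ⟨φ, hφ, hφU⟩ := ih (S.erase a) (erase_ssubset haS)
    (hS.embedding (F.induceHomOfLE hsub)) (card_erase_le.trans hSs)
  obtain ⟨w, hw, hwa⟩ : ∃ w ∈ U, ∀ v, G.Adj w v → ∀ b ∈ S.erase a, F.Adj b a → G.Adj (φ b) v := by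
    by_cases hp : ∃ p ∈ S, F.Adj a p
    · obtain ⟨p, hpS, hap⟩ := hp
      refine ⟨φ p, hφU (mem_erase.mpr ⟨hap.ne', hpS⟩), fun v hv b hb hba => ?_⟩
      rwa [card_le_one.mp hleaf b (by simp_all [hba.symm]) p (by simp [hpS, hap])]
    · push Not at hp
      exact ⟨hU.choose, hU.choose_spec, fun v _ b hb hba =>
        absurd hba.symm (hp b (mem_of_mem_erase hb))⟩
  obtain ⟨g, hg, hgφ, hga⟩ := hφ.exists_extend (B := {a}) (T := U)
    (disjoint_singleton_right.mpr (notMem_erase a S)) (by simp) fun b hb => by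
      obtain rfl := mem_singleton.mp hb
      refine ⟨{v ∈ U | G.Adj w v}, filter_subset _ _, ?_, fun v hv => hwa v (mem_filter.mp hv).2⟩
      rw [card_singleton, card_erase_add_one haS]
      exact hSs.trans (hdeg w hw)
  rw [← coe_union, erase_union_eq a S haS] at hg
  refine ⟨g, hg, fun x hx => ?_⟩
  rcases eq_or_ne x a with rfl | hxa
  · exact hga (mem_singleton_self x)
  · exact hgφ (mem_erase.mpr ⟨hxa, hx⟩) ▸ hφU (mem_erase.mpr ⟨hxa, hx⟩)

theorem exists_forall_adj_imp_eq_of_ncard_le_one {β : Type*} {H : SimpleGraph V} {K : Set V}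
    (hK : K.Finite) {j : V} (hj : {w ∈ K | H.Adj j w}.ncard ≤ 1) (φ : V → β) {W : Set β}
    (hW : W.Nonempty) (hφ : Set.MapsTo φ K W) : ∃ w ∈ W, ∀ k ∈ K, H.Adj j k → φ k = w := by
  by_cases hk : ∃ k ∈ K, H.Adj j k
  · obtain ⟨k, hk, hjk⟩ := hk
    exact ⟨φ k, hφ hk, fun k' hk' hjk' => by
      rw [(Set.ncard_le_one (hK.subset fun _ h => h.1)).mp hj k' ⟨hk', hjk'⟩ k ⟨hk, hjk⟩]⟩
  · push Not at hk
    obtain ⟨w, hw⟩ := hW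
    exact ⟨w, hw, fun k hk' hjk => absurd hjk (hk k hk')⟩

theorem InjHomOn.exists_extend_cloud [Fintype V'] [DecidableEq V'] {H : SimpleGraph V}
    {G : SimpleGraph V'} [DecidableRel G.Adj] {φ : V → V'} {K I J : Finset V} {W : Set V'}
    (hφ : InjHomOn H G φ K) (hφW : Set.MapsTo φ K W) (hW : W.Nonempty)
    (hIJ : Disjoint I J) (hIK : Disjoint I K) (hJK : Disjoint J K)
    (hI : ∀ u ∈ I, ∀ v ∈ I, ¬ H.Adj u v) (hJ : ∀ u ∈ J, ∀ v ∈ J, ¬ H.Adj u v)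
    (hKI : ∀ u ∈ I, ∀ v ∈ K, ¬ H.Adj u v) (hJ1 : ∀ j ∈ J, {w ∈ (K : Set V) | H.Adj j w}.ncard ≤ 1)
    {Z : Finset V'} (hZ : #K + #I + #J ≤ #Z)
    (hcommon : ∀ u ∈ W, #K + #I + #J ≤ #{w | G.Adj u w ∧ ∀ z ∈ Z, G.Adj z w}) :
    ∃ f : V → V', InjHomOn H G f (K ∪ I ∪ J) := by
  classical
  obtain ⟨φI, hφI, hφIK, hφIZ⟩ := hφ.exists_extend (B := I) (T := Z) hIK.symm hI
    fun i hi => ⟨Z, subset_rfl, by omega, fun _ _ k hk hki => absurd hki.symm (hKI i hi k hk)⟩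
  rw [← coe_union] at hφI
  obtain ⟨f, hf, -, -⟩ := hφI.exists_extend (B := J) (T := Set.univ)
    (disjoint_union_left.mpr ⟨hJK.symm, hIJ⟩) hJ fun j hj => by
      -- the `K`-neighbours of `j` (at most one) all go to `w`, and `I` goes into `Z`
      obtain ⟨w, hw, hwK⟩ :=
        exists_forall_adj_imp_eq_of_ncard_le_one K.finite_toSet (hJ1 j hj) φ hW hφW
      refine ⟨({v | G.Adj w v ∧ ∀ z ∈ Z, G.Adj z v} : Finset V'), Set.subset_univ _, ?_,
        fun v hv => ?_⟩
      · rw [card_union_of_disjoint hIK.symm]; exact hcommon w hw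
      simp only [mem_filter, mem_univ, true_and] at hv
      intro a ha haj
      rcases mem_union.mp ha with ha | ha
      · rw [hφIK ha, hwK a ha haj.symm]; exact hv.1
      · exact hv.2 _ (hφIZ ha)
  exact ⟨f, by rwa [coe_union] at hf⟩

end SimpleGraph

theorem stmt11_general {VH VG : Type*} [Fintype VH] [Fintype VG] [DecidableEq VG]
    (H : SimpleGraph VH) (s : ℕ) (hs : Fintype.card VH = s)
    (I J K : Set VH)
    (hpart : I ∪ J ∪ K = Set.univ)
    (hIJ : Disjoint I J) (hIK : Disjoint I K) (hJK : Disjoint J K)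
    (hI : ∀ u ∈ I, ∀ v ∈ I, ¬ H.Adj u v)
    (hJ : ∀ u ∈ J, ∀ v ∈ J, ¬ H.Adj u v)
    (hK : (H.induce K).IsAcyclic)
    (hKI : ∀ u ∈ I, ∀ v ∈ K, ¬ H.Adj u v)
    (hJ1 : ∀ j ∈ J, {w ∈ K | H.Adj j w}.ncard ≤ 1)
    (G : SimpleGraph VG) [DecidableRel G.Adj]
    (E : Finset (Sym2 VG)) (hE : E.Nonempty) (hEG : E ⊆ G.edgeFinset)
    (W : Finset VG) (hW : ∀ v, v ∈ W ↔ ∃ e ∈ E, v ∈ e)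
    (havg : s * W.card ≤ E.card)
    (Z : Finset VG) (hZcard : Z.card = s)
    (hcommon : ∀ u ∈ W,
      s ≤ (Finset.univ.filter (fun w => G.Adj u w ∧ ∀ z ∈ Z, G.Adj z w)).card) :
    ∃ f : H →g G, Function.Injective f := by
  classical
  obtain ⟨I, rfl⟩ := I.toFinite.exists_finset_coe
  obtain ⟨J, rfl⟩ := J.toFinite.exists_finset_coe
  obtain ⟨K, rfl⟩ := K.toFinite.exists_finset_coe
  rw [disjoint_coe] at hIJ hIK hJK
  have huniv : (K ∪ I ∪ J : Set VH) = Set.univ := by rw [← hpart]; ac_rfl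
  have hcard : #K + #I + #J = s := by
    rw [← card_union_of_disjoint hIK.symm, ← card_union_of_disjoint
      (disjoint_union_left.mpr ⟨hJK.symm, hIJ⟩), ← hs, ← card_univ]
    exact congrArg card (coe_eq_univ.mp (by push_cast; exact huniv))
  obtain ⟨U, hUW, hU, hUdeg⟩ := SimpleGraph.exists_subset_le_card_adj_of_mul_card_le
    (fun e he => SimpleGraph.mem_edgeFinset.mp (hEG he))
    (fun e he v hv => (hW v).mpr ⟨e, he, hv⟩) hE havg
  obtain ⟨φ, hφ, hφU⟩ := SimpleGraph.exists_injHomOn_of_isAcyclic_induce hU hUdeg K hK (by omega)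
  obtain ⟨f, hf⟩ := hφ.exists_extend_cloud (Z := Z) (hφU.mono_right (coe_subset.mpr hUW))
    (hU.mono hUW) hIJ hIK hJK hI hJ hKI hJ1 (by omega) (by rwa [hcard])
  rw [huniv] at hf
  exact ⟨⟨f, fun h => hf.2 _ trivial _ trivial h⟩, Set.injOn_univ.mp hf.1⟩

/-- Embedding a cloud-forest graph `H` on `s` vertices (given by the alternative
partition into independent sets `I`, `J` and a forest `K = V(F')` with no `K`–`I`
edges and each `J`-vertex having at most one neighbour in `K`) into a graph `G`,
given a nonempty edge set `E` of average degree at least `2s`, with endpoint set `W`,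
and a set `Z` of `s` vertices disjoint from `W` such that for every `u ∈ W` the set
`Z` has at least `s` common neighbours inside `N_G(u)`, these common-neighbourhood
sets being disjoint from `Z`. Then `H` is a subgraph of `G`. -/
theorem stmt11 {VH VG : Type*} [Fintype VH] [Fintype VG] [DecidableEq VG]
    (H : SimpleGraph VH) (s : ℕ) (hs : Fintype.card VH = s)
    (I J K : Set VH)
    (hpart : I ∪ J ∪ K = Set.univ)
    (hIJ : Disjoint I J) (hIK : Disjoint I K) (hJK : Disjoint J K)
    (hI : ∀ u ∈ I, ∀ v ∈ I, ¬ H.Adj u v)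
    (hJ : ∀ u ∈ J, ∀ v ∈ J, ¬ H.Adj u v)
    (hK : (H.induce K).IsAcyclic)
    (hKI : ∀ u ∈ I, ∀ v ∈ K, ¬ H.Adj u v)
    (hJ1 : ∀ j ∈ J, {w ∈ K | H.Adj j w}.ncard ≤ 1)
    (G : SimpleGraph VG) [DecidableRel G.Adj]
    (E : Finset (Sym2 VG)) (hE : E.Nonempty) (hEG : E ⊆ G.edgeFinset)
    (W : Finset VG) (hW : ∀ v, v ∈ W ↔ ∃ e ∈ E, v ∈ e)
    (havg : s * W.card ≤ E.card)
    (Z : Finset VG) (hZcard : Z.card = s) (hZW : Disjoint Z W)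
    (hcommon : ∀ u ∈ W,
      s ≤ (Finset.univ.filter (fun w => G.Adj u w ∧ ∀ z ∈ Z, G.Adj z w)).card)
    (hZdisj : ∀ u ∈ W,
      Disjoint Z (Finset.univ.filter (fun w => G.Adj u w ∧ ∀ z ∈ Z, G.Adj z w))) :
    ∃ f : H →g G, Function.Injective f :=
  stmt11_general H s hs I J K hpart hIJ hIK hJK hI hJ hK hKI hJ1 G E hE hEG W hW havg Z hZcard
    hcommon
end

section
/- Let H be a graph with chromatic number r. If there exist an integer t and trees T₁,…,T_ℓ such that H is a subgraph of the modified Zykov graph Z_ℓ^{r,t}(T₁,…,T_ℓ), then H is r-near-acyclic in the following sense: one can remove r−3 independent sets from H to obtain a graph H₀ with χ(H₀) = 3 that admits a partition into a forest and an independent set I such that every odd cycle of H₀ meets I in at least two vertices. (The converse also holds.) -/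
/-- The base relation of the modified Zykov graph `Z_ℓ^{r,t}(T₁,…,T_ℓ)`.
Vertices are either tree vertices (`Sum.inl ⟨j, a⟩`, a vertex `a` of the tree `T j`,
whose bipartition class is recorded by `side j a`, with `A_j` the class `true`),
or blown-up vertices `Sum.inr (c, i)` with `i : Fin t`, where `c = Sum.inl I`
corresponds to the Zykov vertex `u_I` for `I ⊆ [ℓ]`, and `c = Sum.inr w` to one of
the `r - 3` universal vertices `w₁, …, w_{r-3}`.  Edges (after symmetrisation by
`SimpleGraph.fromRel`): tree edges; `u_I` joined to `A_j` for `j ∈ I` and to `B_j`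
for `j ∉ I`; and each `w` joined to everything outside its own blow-up class. -/
def ZykovRel (ℓ r t : ℕ) {τ : Fin ℓ → Type} (T : ∀ j, SimpleGraph (τ j))
    (side : ∀ j, τ j → Bool) :
    ((Σ j, τ j) ⊕ ((Finset (Fin ℓ) ⊕ Fin (r - 3)) × Fin t)) →
    ((Σ j, τ j) ⊕ ((Finset (Fin ℓ) ⊕ Fin (r - 3)) × Fin t)) → Prop
  | Sum.inl p, Sum.inl q => ∃ h : p.1 = q.1, (T q.1).Adj (h ▸ p.2) q.2
  | Sum.inr (Sum.inl I, _), Sum.inl q =>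
      (q.1 ∈ I ∧ side q.1 q.2 = true) ∨ (q.1 ∉ I ∧ side q.1 q.2 = false)
  | Sum.inr (Sum.inr _, _), Sum.inl _ => True
  | Sum.inr (Sum.inr w, _), Sum.inr (c, _) => c ≠ Sum.inr w
  | _, _ => False

/-- The modified Zykov graph `Z_ℓ^{r,t}(T₁,…,T_ℓ)`. -/
def ModifiedZykov (ℓ r t : ℕ) {τ : Fin ℓ → Type} (T : ∀ j, SimpleGraph (τ j))
    (side : ∀ j, τ j → Bool) :
    SimpleGraph ((Σ j, τ j) ⊕ ((Finset (Fin ℓ) ⊕ Fin (r - 3)) × Fin t)) :=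
  SimpleGraph.fromRel (ZykovRel ℓ r t T side)

/-- A graph is near-acyclic if it is 3-chromatic and admits a partition into a
forest and an independent set `I` such that every odd cycle meets `I` in at least
two vertices. -/
def NearAcyclic {V : Type*} (K : SimpleGraph V) : Prop :=
  K.chromaticNumber = 3 ∧
  ∃ I : Set V,
    (∀ u ∈ I, ∀ v ∈ I, ¬ K.Adj u v) ∧
    (K.induce Iᶜ).IsAcyclic ∧
    ∀ (v : V) (c : K.Walk v v), c.IsCycle → Odd c.length →
      2 ≤ {x ∈ I | x ∈ c.support}.ncard

section ZykAux

open SimpleGraph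

variable {VH : Type*} {ℓ r t : ℕ} {τ : Fin ℓ → Type} {T : ∀ j, SimpleGraph (τ j)}
  {side : ∀ j, τ j → Bool} {H : SimpleGraph VH}

/-- Parity of walks in a tree with a proper 2-colouring. -/
lemma zyk_treeParity {j : Fin ℓ} (hs : ∀ a b, (T j).Adj a b → side j a ≠ side j b)
    {a b : τ j} (w : (T j).Walk a b) : (side j a = side j b) ↔ Even w.length := by
  induction w with
  | nil => simp
  | cons h q ih =>
    have := hs _ _ h
    rw [SimpleGraph.Walk.length_cons, Nat.even_add_one, ← ih]
    revert this
    cases side j a <;> rename_i x c <;> cases side j x <;> cases side j c <;> simp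

lemma zyk_treeAdj (f : H →g ModifiedZykov ℓ r t T side)
    {u v : VH} {j : Fin ℓ} {pu : τ j} {p : Σ j, τ j}
    (hadj : H.Adj u v) (hu : f u = Sum.inl ⟨j, pu⟩) (hv : f v = Sum.inl p) :
    ∃ pv : τ j, p = ⟨j, pv⟩ ∧ (T j).Adj pu pv := by
  have hA := f.map_adj hadj
  rw [hu, hv] at hA
  unfold ModifiedZykov at hA
  rw [SimpleGraph.fromRel_adj] at hA
  obtain ⟨j', pv⟩ := p
  obtain ⟨-, hrel | hrel⟩ := hA
  · obtain ⟨h', hTadj⟩ := hrel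
    dsimp at h' hTadj
    subst h'
    exact ⟨pv, rfl, hTadj⟩
  · obtain ⟨h', hTadj⟩ := hrel
    dsimp at h' hTadj
    subst h'
    exact ⟨pv, rfl, hTadj.symm⟩

lemma zyk_uAdj (f : H →g ModifiedZykov ℓ r t T side)
    {u v : VH} {J : Finset (Fin ℓ)} {k : Fin t} {p : Σ j, τ j}
    (hadj : H.Adj u v) (hu : f u = Sum.inr (Sum.inl J, k)) (hv : f v = Sum.inl p) :
    side p.1 p.2 = decide (p.1 ∈ J) := by
  have hA := f.map_adj hadj
  rw [hu, hv] at hA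
  unfold ModifiedZykov at hA
  rw [SimpleGraph.fromRel_adj] at hA
  obtain ⟨-, hrel | hrel⟩ := hA
  · rcases hrel with ⟨h1, h2⟩ | ⟨h1, h2⟩ <;> simp [h1, h2]
  · exact hrel.elim

lemma zyk_uuAdj (f : H →g ModifiedZykov ℓ r t T side)
    {u v : VH} {J J' : Finset (Fin ℓ)} {k k' : Fin t}
    (hadj : H.Adj u v) (hu : f u = Sum.inr (Sum.inl J, k)) (hv : f v = Sum.inr (Sum.inl J', k')) :
    False := by
  have hA := f.map_adj hadj
  rw [hu, hv] at hA
  unfold ModifiedZykov at hA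
  rw [SimpleGraph.fromRel_adj] at hA
  obtain ⟨-, hrel | hrel⟩ := hA <;> exact hrel

lemma zyk_wwAdj (f : H →g ModifiedZykov ℓ r t T side)
    {u v : VH} {i : Fin (r - 3)} {k k' : Fin t}
    (hadj : H.Adj u v) (hu : f u = Sum.inr (Sum.inr i, k)) (hv : f v = Sum.inr (Sum.inr i, k')) :
    False := by
  have hA := f.map_adj hadj
  rw [hu, hv] at hA
  unfold ModifiedZykov at hA
  rw [SimpleGraph.fromRel_adj] at hA
  obtain ⟨-, hrel | hrel⟩ := hA <;> exact hrel rfl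

/-- Lift a walk of `H` all of whose vertices are mapped to tree vertices to a walk
in the corresponding tree. -/
lemma zyk_liftWalk (f : H →g ModifiedZykov ℓ r t T side)
    {a b : VH} (w : H.Walk a b) :
    ∀ {j : Fin ℓ} {pa : τ j}, f a = Sum.inl ⟨j, pa⟩ →
    (∀ x ∈ w.support, ∃ p : Σ j, τ j, f x = Sum.inl p) →
    ∃ (pb : τ j) (w' : (T j).Walk pa pb),
      f b = Sum.inl ⟨j, pb⟩ ∧ w'.length = w.length ∧
      w.support.map f = w'.support.map (fun z => Sum.inl ⟨j, z⟩) := by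
  induction w with
  | nil =>
    intro j pa ha _
    exact ⟨pa, SimpleGraph.Walk.nil, ha, rfl, by simp [ha]⟩
  | cons h q ih =>
    intro j pa ha hall
    rename_i u x c
    obtain ⟨p, hx⟩ := hall x (by simp)
    obtain ⟨px, rfl, hTadj⟩ := zyk_treeAdj f h ha hx
    obtain ⟨pb, w', hb, hlen, hsupp⟩ := ih hx (fun y hy => hall y (by simp [hy]))
    exact ⟨pb, SimpleGraph.Walk.cons hTadj w', hb, by simp [hlen], by simp [ha, hsupp]⟩

end ZykAux

section ZykAux2

open SimpleGraph

variable {VH : Type*} {ℓ r t : ℕ} {τ : Fin ℓ → Type} {T : ∀ j, SimpleGraph (τ j)}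
  {side : ∀ j, τ j → Bool} {H : SimpleGraph VH}

lemma zyk_mem_support_rotate {V : Type*} [DecidableEq V] {G : SimpleGraph V} {v u : V} (c : G.Walk v v)
    (h : u ∈ c.support) {x : V} (hx : x ∈ (c.rotate u h).support) : x ∈ c.support := by
  rw [SimpleGraph.Walk.support_eq_cons] at hx
  rcases List.mem_cons.mp hx with rfl | hx
  · exact h
  · exact List.mem_of_mem_tail
      (((SimpleGraph.Walk.support_rotate c u h).mem_iff).mp hx)

/-- No cycle of `H` has all its vertices mapped to tree vertices. -/
lemma zyk_key1 (f : H →g ModifiedZykov ℓ r t T side) (hf : Function.Injective f)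
    (hT : ∀ j, (T j).Connected ∧ (T j).IsAcyclic)
    (v : VH) (d : H.Walk v v) (hd : d.IsCycle)
    (hall : ∀ y ∈ d.support, ∃ p : Σ j, τ j, f y = Sum.inl p) : False := by
  cases d with
  | nil => exact hd.ne_nil rfl
  | cons h p =>
    rename_i u
    have h3 := hd.three_le_length
    rw [SimpleGraph.Walk.cons_isCycle_iff] at hd
    obtain ⟨hp, -⟩ := hd
    obtain ⟨⟨j, pv⟩, hfv⟩ := hall v (by simp)
    obtain ⟨qq, hfu⟩ := hall u (by simp)
    obtain ⟨pu, rfl, hTvu⟩ := zyk_treeAdj f h hfv hfu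
    obtain ⟨pb, w', hfv', hlen, hsupp⟩ := zyk_liftWalk f p hfu
      (fun y hy => hall y (by simp [hy]))
    obtain rfl : pb = pv := by
      have := hfv'.symm.trans hfv
      simpa using this
    have hac := (hT j).2
    rw [SimpleGraph.isAcyclic_iff_path_unique] at hac
    have hw'path : w'.IsPath := by
      rw [SimpleGraph.Walk.isPath_def]
      have h1 : (p.support.map f).Nodup := hp.support_nodup.map hf
      rw [hsupp] at h1
      exact h1.of_map _
    have heq := hac ⟨w', hw'path⟩ (SimpleGraph.Path.singleton hTvu.symm)
    have hlen1 := congrArg (fun P => SimpleGraph.Walk.length P.1) heq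
    simp only [SimpleGraph.Path.singleton, SimpleGraph.Walk.length_cons,
      SimpleGraph.Walk.length_nil] at hlen1
    simp only [SimpleGraph.Walk.length_cons] at h3
    omega

/-- No odd cycle of `H` passes through exactly one `u_I`-vertex, all other
vertices being tree vertices. -/
lemma zyk_key2 (f : H →g ModifiedZykov ℓ r t T side)
    (hside : ∀ j, ∀ a b, (T j).Adj a b → side j a ≠ side j b)
    (w : VH) (d : H.Walk w w) (hd : d.IsCycle) (hodd : Odd d.length)
    (hw : ∃ (J : Finset (Fin ℓ)) (k : Fin t), f w = Sum.inr (Sum.inl J, k))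
    (hall : ∀ y ∈ d.support, y ≠ w → ∃ p : Σ j, τ j, f y = Sum.inl p) : False := by
  obtain ⟨J, k, hfw⟩ := hw
  cases d with
  | nil => exact hd.ne_nil rfl
  | cons h p =>
    rename_i u
    have h3 := hd.three_le_length
    rw [SimpleGraph.Walk.cons_isCycle_iff] at hd
    obtain ⟨hp, -⟩ := hd
    cases p with
    | nil => simp at h3
    | cons h₁ p₁ =>
      rename_i z
      obtain ⟨y, q, h₂, hq⟩ := SimpleGraph.Walk.exists_cons_eq_concat h₁ p₁
      -- q : H.Walk u y, h₂ : H.Adj y w, cons h₁ p₁ = q.concat h₂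
      have hsupp : (SimpleGraph.Walk.cons h₁ p₁).support = q.support ++ [w] := by
        rw [hq, SimpleGraph.Walk.support_concat]
      have hnodup : ((SimpleGraph.Walk.cons h₁ p₁).support).Nodup := hp.support_nodup
      rw [hsupp] at hnodup
      have hwq : w ∉ q.support := by
        intro hmem
        exact (List.disjoint_of_nodup_append hnodup) hmem (by simp)
      have hallq : ∀ x ∈ q.support, ∃ p : Σ j, τ j, f x = Sum.inl p := by
        intro x hx
        refine hall x ?_ (fun hxw => hwq (hxw ▸ hx))
        simp only [SimpleGraph.Walk.support_cons, hsupp]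
        simp [hx]
      obtain ⟨⟨j, pu⟩, hfu⟩ := hallq u q.start_mem_support
      obtain ⟨pb, w', hfy, hlen, -⟩ := zyk_liftWalk f q hfu hallq
      -- parity
      have hpar := zyk_treeParity (hside j) w'
      -- lengths : d.length = q.length + 2
      have hlq : (SimpleGraph.Walk.cons h₁ p₁).length = q.length + 1 := by
        rw [hq]
        simp [SimpleGraph.Walk.concat_eq_append]
      have hoddq : ¬ Even q.length := by
        rcases hodd with ⟨m, hm⟩
        simp only [SimpleGraph.Walk.length_cons] at hm hlq
        rw [Nat.even_iff]
        omega
      rw [hlen] at hpar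
      have hne : side j pu ≠ side j pb := fun hEq => hoddq (hpar.mp hEq)
      -- both ends adjacent to the u_I vertex w
      have e1 : side j pu = decide (j ∈ J) := zyk_uAdj f h hfw hfu
      have e2 : side j pb = decide (j ∈ J) := zyk_uAdj f h₂.symm hfw hfy
      exact hne (e1.trans e2.symm)

end ZykAux2

/-- If `H` with `χ(H) = r` is a subgraph of a modified Zykov graph
`Z_ℓ^{r,t}(T₁,…,T_ℓ)` for some trees `T₁,…,T_ℓ` (with proper 2-colourings giving
their bipartitions) and some `t`, then `H` is `r`-near-acyclic: one can remove
`r - 3` independent sets from `H` so that the remaining induced graph is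
near-acyclic. -/
theorem stmt18 {VH : Type*} [Fintype VH] (H : SimpleGraph VH)
    (r : ℕ) (hr : 3 ≤ r) (hchi : H.chromaticNumber = (r : ℕ∞))
    (hex : ∃ (ℓ t : ℕ) (τ : Fin ℓ → Type) (T : ∀ j, SimpleGraph (τ j))
        (side : ∀ j, τ j → Bool),
      (∀ j, (T j).Connected ∧ (T j).IsAcyclic) ∧
      (∀ j, ∀ a b, (T j).Adj a b → side j a ≠ side j b) ∧
      ∃ f : H →g ModifiedZykov ℓ r t T side, Function.Injective f) :
    ∃ S : Fin (r - 3) → Set VH,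
      (∀ i, ∀ u ∈ S i, ∀ v ∈ S i, ¬ H.Adj u v) ∧
      NearAcyclic (H.induce {v | ∀ i, v ∉ S i}) := by
  classical
  obtain ⟨ℓ, t, τ, T, side, hT, hside, f, hf⟩ := hex
  set S : Fin (r - 3) → Set VH := fun i => {v | ∃ k, f v = Sum.inr (Sum.inr i, k)} with hS
  have hind : ∀ i, ∀ u ∈ S i, ∀ v ∈ S i, ¬ H.Adj u v := by
    rintro i u ⟨k, hu⟩ v ⟨k', hv⟩ hadj
    exact zyk_wwAdj f hadj hu hv
  have hclass : ∀ v : VH, (∀ i, v ∉ S i) →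
      (∃ p : Σ j, τ j, f v = Sum.inl p) ∨
      (∃ (J : Finset (Fin ℓ)) (k : Fin t), f v = Sum.inr (Sum.inl J, k)) := by
    intro v hv
    rcases hfv : f v with p | ⟨J | i, k⟩
    · exact Or.inl ⟨p, rfl⟩
    · exact Or.inr ⟨J, k, rfl⟩
    · exact absurd ⟨k, hfv⟩ (hv i)
  set V₀ : Set VH := {v | ∀ i, v ∉ S i} with hV₀
  set H₀ : SimpleGraph V₀ := H.induce V₀ with hH₀
  -- 3-colorability
  have hcol3 : H₀.Colorable 3 := by
    let colZ : ((Σ j, τ j) ⊕ ((Finset (Fin ℓ) ⊕ Fin (r - 3)) × Fin t)) → Fin 3 :=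
      fun z => match z with
      | Sum.inl p => if side p.1 p.2 then 0 else 1
      | Sum.inr _ => 2
    refine ⟨SimpleGraph.Coloring.mk (fun x => colZ (f x.1)) ?_⟩
    rintro ⟨x, hx⟩ ⟨y, hy⟩ hadj heq
    have hadj' : H.Adj x y := hadj
    rcases hclass x hx with ⟨p, hpx⟩ | ⟨J, k, hpx⟩ <;>
      rcases hclass y hy with ⟨q, hqy⟩ | ⟨J', k', hqy⟩
    · obtain ⟨j, px⟩ := p
      obtain ⟨py, rfl, hTadj⟩ := zyk_treeAdj f hadj' hpx hqy
      have hne := hside j px py hTadj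
      simp only [colZ, hpx, hqy] at heq
      revert heq hne
      cases side j px <;> cases side j py <;> simp
    · simp only [colZ, hpx, hqy] at heq
      split at heq <;> exact absurd heq (by decide)
    · simp only [colZ, hpx, hqy] at heq
      split at heq <;> exact absurd heq (by decide)
    · exact zyk_uuAdj f hadj' hpx hqy
  -- not 2-colorable
  have hnc2 : ¬ H₀.Colorable 2 := by
    rintro ⟨C₂⟩
    have pick : ∀ v : VH, ¬ (∀ i, v ∉ S i) → ∃ i, v ∈ S i := by
      intro v h; push_neg at h; exact h
    have CH : H.Coloring (Fin 2 ⊕ Fin (r - 3)) := by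
      refine SimpleGraph.Coloring.mk (fun v =>
        if h : ∀ i, v ∉ S i then Sum.inl (C₂ ⟨v, h⟩)
        else Sum.inr (pick v h).choose) ?_
      intro v w hadj heq
      beta_reduce at heq
      by_cases hv : ∀ i, v ∉ S i <;> by_cases hw : ∀ i, w ∉ S i
      · rw [dif_pos hv, dif_pos hw] at heq
        have hadj' : H₀.Adj ⟨v, hv⟩ ⟨w, hw⟩ := hadj
        exact C₂.valid hadj' (Sum.inl.inj heq)
      · rw [dif_pos hv, dif_neg hw] at heq
        cases heq
      · rw [dif_neg hv, dif_pos hw] at heq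
        cases heq
      · rw [dif_neg hv, dif_neg hw] at heq
        have hi := Sum.inr.inj heq
        have h1 := (pick v hv).choose_spec
        have h2 := (pick w hw).choose_spec
        rw [hi] at h1
        exact hind _ _ h1 _ h2 hadj
    have hcolH : H.Colorable (2 + (r - 3)) := by
      simpa using CH.colorable
    have hle := hcolH.chromaticNumber_le
    rw [hchi] at hle
    have : r ≤ 2 + (r - 3) := by exact_mod_cast hle
    omega
  have hchi3 : H₀.chromaticNumber = 3 := by
    have h1 := hcol3.chromaticNumber_le
    have h2 : ¬ H₀.chromaticNumber ≤ 2 := by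
      rw [show ((2 : ℕ∞)) = ((2 : ℕ) : ℕ∞) by norm_cast,
        SimpleGraph.chromaticNumber_le_iff_colorable]
      exact hnc2
    have h2' : (2 : ℕ∞) < H₀.chromaticNumber := lt_of_not_ge h2
    have h3 : (3 : ℕ∞) ≤ H₀.chromaticNumber := by
      have := Order.add_one_le_of_lt h2'
      norm_num at this
      exact_mod_cast this
    exact le_antisymm (by exact_mod_cast h1) h3
  refine ⟨S, hind, hchi3, {x : V₀ | ∃ (J : Finset (Fin ℓ)) (k : Fin t),
      f x.1 = Sum.inr (Sum.inl J, k)}, ?_, ?_, ?_⟩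
  · rintro ⟨u, hu⟩ ⟨J, k, hfu⟩ ⟨v, hv⟩ ⟨J', k', hfv⟩ hadj
    exact zyk_uuAdj f hadj hfu hfv
  · -- acyclicity of the complement of I
    intro x c hc
    let g1 := (SimpleGraph.Embedding.induce (G := H.induce V₀)
      ({x : V₀ | ∃ (J : Finset (Fin ℓ)) (k : Fin t), f x.1 = Sum.inr (Sum.inl J, k)}ᶜ)).toHom
    let g0 := (SimpleGraph.Embedding.induce (G := H) V₀).toHom
    have hinj : Function.Injective ⇑(g0.comp g1) := by
      intro a b hab
      exact Subtype.val_injective (Subtype.val_injective hab)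
    refine zyk_key1 f hf hT _ (c.map (g0.comp g1)) (hc.map hinj) ?_
    intro y hy
    rw [SimpleGraph.Walk.support_map] at hy
    obtain ⟨y₀, hy₀, rfl⟩ := List.mem_map.mp hy
    rcases hclass y₀.1.1 y₀.1.2 with h | ⟨J, k, hfy⟩
    · exact h
    · exact absurd ⟨J, k, hfy⟩ y₀.2
  · -- odd cycles meet I twice
    intro v c hc hodd
    by_contra hlt
    push_neg at hlt
    have hsub := (Set.ncard_le_one (Set.toFinite _)).mp (Nat.lt_succ_iff.mp hlt)
    let g0 := (SimpleGraph.Embedding.induce (G := H) V₀).toHom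
    have hinj0 : Function.Injective ⇑g0 := fun a b hab => Subtype.val_injective hab
    by_cases hex1 : ∃ y ∈ c.support, ∃ (J : Finset (Fin ℓ)) (k : Fin t),
        f y.1 = Sum.inr (Sum.inl J, k)
    · obtain ⟨y₀, hy₀s, hy₀I⟩ := hex1
      have huniq : ∀ z : V₀, (∃ (J : Finset (Fin ℓ)) (k : Fin t),
          f z.1 = Sum.inr (Sum.inl J, k)) → z ∈ c.support → z = y₀ := by
        intro z h1 h2
        exact hsub z ⟨h1, h2⟩ y₀ ⟨hy₀I, hy₀s⟩
      set c' := c.rotate _ hy₀s with hc'def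
      have hc' : c'.IsCycle := hc.rotate hy₀s
      have hlenc' : c'.length = c.length := by
        have := (SimpleGraph.Walk.rotate_darts c _ hy₀s).perm.length_eq
        rwa [SimpleGraph.Walk.length_darts, SimpleGraph.Walk.length_darts] at this
      refine zyk_key2 f hside _ (c'.map g0) (hc'.map hinj0) ?_ ?_ ?_
      · rwa [SimpleGraph.Walk.length_map, hlenc']
      · exact hy₀I
      · intro y hy hyne
        rw [SimpleGraph.Walk.support_map] at hy
        obtain ⟨z, hz, rfl⟩ := List.mem_map.mp hy
        have hz' : z ∈ c.support := zyk_mem_support_rotate c hy₀s hz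
        rcases hclass z.1 z.2 with h | ⟨J, k, hfz⟩
        · exact h
        · exact absurd (congrArg g0 (huniq z ⟨J, k, hfz⟩ hz')) hyne
    · push_neg at hex1
      rcases hclass v.1 v.2 with ⟨⟨j, pv⟩, hfv⟩ | hbad
      · have hall : ∀ y ∈ (c.map g0).support, ∃ p : Σ j, τ j, f y = Sum.inl p := by
          intro y hy
          rw [SimpleGraph.Walk.support_map] at hy
          obtain ⟨z, hz, rfl⟩ := List.mem_map.mp hy
          rcases hclass z.1 z.2 with h | ⟨J, k, hfz⟩
          · exact h
          · exact absurd hfz (hex1 z hz J k)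
        obtain ⟨pb, w', hfv', hlen, -⟩ := zyk_liftWalk f (c.map g0) hfv hall
        obtain rfl : pb = pv := by
          have := hfv'.symm.trans hfv
          simpa using this
        have hpar := zyk_treeParity (hside j) w'
        rw [hlen, SimpleGraph.Walk.length_map] at hpar
        exact (Nat.not_even_iff_odd.mpr hodd) (hpar.mp rfl)
      · obtain ⟨J, k, hb⟩ := hbad
        exact hex1 v c.start_mem_support J k hb
end
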